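/- Let F be a factorization forest of a word w. Then the family of dependencies {dep(I) : I ∈ iter(F) ∪ {F}} forms a partition of the set of nodes of F. -/

import Mathlib

inductive FForest (A : Type) : Type
  | leaf (a : A) : FForest A
  | node (children : List (FForest A)) : FForest A

namespace FForest

variable {A : Type} {M : Type} [Monoid M]

def wordOf : FForest A → List A
  | .leaf a => [a]
  | .node l => (l.attach.map (fun x => wordOf x.1)).flatten
decreasing_by simp only [FForest.node.sizeOf_spec]; have := List.sizeOf_lt_of_mem x.2; omega

def height : FForest A → ℕ
  | .leaf _ => 1
  | .node l => 1 + (l.attach.map (fun x => height x.1)).foldr max 0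
decreasing_by simp only [FForest.node.sizeOf_spec]; have := List.sizeOf_lt_of_mem x.2; omega

def prodOf (μ : A → M) (F : FForest A) : M := ((wordOf F).map μ).prod

inductive Valid (μ : A → M) : FForest A → Prop
  | leaf (a : A) : Valid μ (.leaf a)
  | binary (F₁ F₂ : FForest A) : Valid μ F₁ → Valid μ F₂ → Valid μ (.node [F₁, F₂])
  | idem (l : List (FForest A)) (e : M) : 3 ≤ l.length → (∀ F ∈ l, Valid μ F) →
      e * e = e → (∀ F ∈ l, prodOf μ F = e) → Valid μ (.node l)

def subtreeAt : FForest A → List ℕ → Option (FForest A)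
  | F, [] => some F
  | .leaf _, _ :: _ => none
  | .node l, i :: p =>
      match l[i]? with
      | some c => subtreeAt c p
      | none => none
termination_by F p => p.length

def offsetAt : FForest A → List ℕ → ℕ
  | _, [] => 0
  | .leaf _, _ :: _ => 0
  | .node l, i :: p =>
      ((l.take i).map (fun c => (wordOf c).length)).sum +
      (match l[i]? with
       | some c => offsetAt c p
       | none => 0)
termination_by F p => p.length

inductive DepPath : FForest A → List ℕ → Prop
  | nil (F : FForest A) : DepPath F []
  | cons (l : List (FForest A)) (i : ℕ) (p : List ℕ) (hi : i < l.length)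
      (hd : i = 0 ∨ i = l.length - 1) (h : DepPath l[i] p) : DepPath (.node l) (i :: p)

def IsPath (F : FForest A) (p : List ℕ) : Prop := (subtreeAt F p).isSome

def IterPath (F : FForest A) (p : List ℕ) : Prop :=
  ∃ q i l, p = q ++ [i] ∧ subtreeAt F q = some (.node l) ∧ 1 ≤ i ∧ i + 2 ≤ l.length

def PartPath (F : FForest A) (p : List ℕ) : Prop := p = [] ∨ IterPath F p

def depOf (F : FForest A) (p : List ℕ) : Set (List ℕ) :=
  {r | ∃ q I, subtreeAt F p = some I ∧ DepPath I q ∧ r = p ++ q}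

def frSet (F : FForest A) (p : List ℕ) : Set ℕ :=
  {j | ∃ q I a, subtreeAt F p = some I ∧ DepPath I q ∧
        subtreeAt F (p ++ q) = some (.leaf a) ∧ j = offsetAt F (p ++ q)}

mutual
def frWord : FForest A → List A
  | .leaf a => [a]
  | .node [] => []
  | .node (f :: rest) => frWord f ++ frWordLast rest
def frWordLast : List (FForest A) → List A
  | [] => []
  | [g] => frWord g
  | _ :: g :: rest => frWordLast (g :: rest)
end

mutual
def frList : FForest A → List ℕ
  | .leaf _ => [0]
  | .node [] => []
  | .node (f :: rest) => frList f ++ (frListLast rest).map (· + (wordOf f).length)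
def frListLast : List (FForest A) → List ℕ
  | [] => []
  | [g] => frList g
  | g :: rest => (frListLast rest).map (· + (wordOf g).length)
end

end FForest

namespace FForestAux

open FForest

variable {A : Type}

lemma subtreeAt_nil (F : FForest A) : subtreeAt F [] = some F := by rw [subtreeAt]

lemma subtreeAt_cons (l : List (FForest A)) (i : ℕ) (p : List ℕ) (c : FForest A)
    (h : l[i]? = some c) : subtreeAt (.node l) (i :: p) = subtreeAt c p := by
  rw [subtreeAt, h]

lemma mem_depOf_iff (F : FForest A) (p r : List ℕ) :
    r ∈ depOf F p ↔ ∃ q I, subtreeAt F p = some I ∧ DepPath I q ∧ r = p ++ q := Iff.rfl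

lemma depPath_split {F : FForest A} {p q : List ℕ} (h : DepPath F (p ++ q)) :
    ∃ I, subtreeAt F p = some I ∧ DepPath I q := by
  induction p generalizing F with
  | nil => exact ⟨F, subtreeAt_nil F, h⟩
  | cons i p ih =>
    cases h with
    | cons l i p' hi hd h' =>
      obtain ⟨I, h1, h2⟩ := ih h'
      refine ⟨I, ?_, h2⟩
      rw [subtreeAt_cons l i p l[i] (List.getElem?_eq_getElem hi), h1]

lemma not_dep_of_iter {F : FForest A} {p q : List ℕ} (hi : IterPath F p)
    (hd : DepPath F (p ++ q)) : False := by
  obtain ⟨q₀, j, l, rfl, hsub, h1, h2⟩ := hi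
  rw [List.append_assoc] at hd
  obtain ⟨I, hI, hdq⟩ := depPath_split hd
  rw [hsub] at hI
  cases hI
  cases hdq with
  | cons l j p' hj hd h' => omega

lemma exists_part {F : FForest A} {r : List ℕ} (hr : (subtreeAt F r).isSome) :
    ∃ p, PartPath F p ∧ r ∈ depOf F p := by
  induction r generalizing F with
  | nil => exact ⟨[], Or.inl rfl, [], F, subtreeAt_nil F, DepPath.nil F, by simp⟩
  | cons i r ih =>
    cases F with
    | leaf a => rw [subtreeAt] at hr; simp at hr
    | node l =>
      rw [subtreeAt] at hr
      cases h : l[i]? with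
      | none => rw [h] at hr; simp at hr
      | some c =>
        rw [h] at hr
        have hi_lt : i < l.length := by
          by_contra hc
          rw [List.getElem?_eq_none (by omega)] at h
          simp at h
        have hceq : l[i] = c := by
          have := List.getElem?_eq_getElem hi_lt
          rw [h] at this; exact (Option.some.inj this).symm
        obtain ⟨p', hp', q', I, hsub, hdep, hr'⟩ := ih hr
        by_cases hb : (i = 0 ∨ i = l.length - 1) ∧ p' = []
        · obtain ⟨hbd, rfl⟩ := hb
          refine ⟨[], Or.inl rfl, i :: r, .node l, subtreeAt_nil _, ?_, by simp⟩
          rw [subtreeAt_nil] at hsub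
          cases hsub
          rw [List.nil_append] at hr'
          subst hr'
          exact DepPath.cons l i r hi_lt hbd (by rw [hceq]; exact hdep)
        · refine ⟨i :: p', ?_, q', I, ?_, hdep, by rw [hr']; rfl⟩
          · right
            rcases hp' with rfl | ⟨q₀, j, l', rfl, hsub', h1, h2⟩
            · have hb' : ¬(i = 0 ∨ i = l.length - 1) := fun hh => hb ⟨hh, rfl⟩
              push_neg at hb'
              obtain ⟨hb0, hb1⟩ := hb'
              exact ⟨[], i, l, rfl, subtreeAt_nil _, by omega, by omega⟩
            · exact ⟨i :: q₀, j, l', rfl, by rw [subtreeAt_cons l i _ c h]; exact hsub', h1, h2⟩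
          · rw [subtreeAt_cons l i _ c h]; exact hsub

lemma iter_ne_nil {F : FForest A} {p : List ℕ} (h : IterPath F p) : p ≠ [] := by
  obtain ⟨q, i, l, rfl, -, -, -⟩ := h
  simp

lemma iter_tail {l : List (FForest A)} {i : ℕ} {p : List ℕ} {c : FForest A}
    (hI : IterPath (.node l) (i :: p)) (hc : l[i]? = some c) : PartPath c p := by
  obtain ⟨q₀, j, l', hq, hsub, h1, h2⟩ := hI
  cases q₀ with
  | nil =>
    rw [List.nil_append] at hq
    injection hq with h3 h4
    subst h4
    exact Or.inl rfl
  | cons a q₀' =>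
    injection hq with h3 h4
    subst h3
    right
    refine ⟨q₀', j, l', h4, ?_, h1, h2⟩
    rw [subtreeAt_cons l i _ c hc] at hsub
    exact hsub

lemma part_unique {F : FForest A} {r p₁ p₂ : List ℕ}
    (h₁ : PartPath F p₁) (hm₁ : r ∈ depOf F p₁)
    (h₂ : PartPath F p₂) (hm₂ : r ∈ depOf F p₂) : p₁ = p₂ := by
  induction r generalizing F p₁ p₂ with
  | nil =>
    obtain ⟨q, I, _, _, he⟩ := hm₁
    obtain ⟨q', I', _, _, he'⟩ := hm₂
    obtain ⟨rfl, rfl⟩ := List.append_eq_nil_iff.mp he.symm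
    obtain ⟨rfl, rfl⟩ := List.append_eq_nil_iff.mp he'.symm
    rfl
  | cons i r ih =>
    -- first: if one is empty, so is the other
    rcases h₁ with rfl | hI₁
    · rcases h₂ with rfl | hI₂
      · rfl
      · exfalso
        obtain ⟨q, I, hs, hd, he⟩ := hm₁
        rw [subtreeAt_nil] at hs
        cases hs
        rw [List.nil_append] at he
        subst he
        obtain ⟨q', I', hs', hd', he'⟩ := hm₂
        rw [he'] at hd
        exact not_dep_of_iter hI₂ hd
    · rcases h₂ with rfl | hI₂
      · exfalso
        obtain ⟨q, I, hs, hd, he⟩ := hm₂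
        rw [subtreeAt_nil] at hs
        cases hs
        rw [List.nil_append] at he
        subst he
        obtain ⟨q', I', hs', hd', he'⟩ := hm₁
        rw [he'] at hd
        exact not_dep_of_iter hI₁ hd
      · -- both nonempty
        obtain ⟨q₁, I₁, hs₁, hd₁, he₁⟩ := hm₁
        obtain ⟨q₂, I₂, hs₂, hd₂, he₂⟩ := hm₂
        obtain ⟨p₁', rfl⟩ : ∃ p', p₁ = i :: p' := by
          cases p₁ with
          | nil => exact absurd rfl (iter_ne_nil hI₁)
          | cons a p' =>
            injection he₁ with h3 _
            exact ⟨p', by rw [h3]⟩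
        obtain ⟨p₂', rfl⟩ : ∃ p', p₂ = i :: p' := by
          cases p₂ with
          | nil => exact absurd rfl (iter_ne_nil hI₂)
          | cons a p' =>
            injection he₂ with h3 _
            exact ⟨p', by rw [h3]⟩
        injection he₁ with _ he₁'
        injection he₂ with _ he₂'
        cases F with
        | leaf a => rw [subtreeAt] at hs₁; simp at hs₁
        | node l =>
          cases h : l[i]? with
          | none =>
            rw [subtreeAt, h] at hs₁
            simp at hs₁
          | some c =>
            rw [subtreeAt_cons l i _ c h] at hs₁ hs₂
            have := ih (F := c) (iter_tail hI₁ h) ⟨q₁, I₁, hs₁, hd₁, he₁'⟩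
              (iter_tail hI₂ h) ⟨q₂, I₂, hs₂, hd₂, he₂'⟩
            rw [this]

end FForestAux

theorem dep_partition_of_nodes {A M : Type} [Monoid M] (μ : A → M) (F : FForest A)
    (hF : FForest.Valid μ F) (r : List ℕ) (hr : FForest.IsPath F r) :
    ∃! p : List ℕ, FForest.PartPath F p ∧ r ∈ FForest.depOf F p := by
  obtain ⟨p, hp, hm⟩ := FForestAux.exists_part hr
  exact ⟨p, ⟨hp, hm⟩, fun p' ⟨hp', hm'⟩ => FForestAux.part_unique hp' hm' hp hm⟩
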